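/- If, in addition, the random vectors (X_i)_{i∈I_1}, …, (X_i)_{i∈I_p} are mutually independent, then for every (λ_1,…,λ_p) ∈ (0,∞)^p, ε(λ_1,…,λ_p) = Σ_{j=1}^p λ_j^{-1} ε_{I_j}(1). -/

import Mathlib

open MeasureTheory ProbabilityTheory Real Filter Topology
open scoped ProbabilityTheory

noncomputable section

/-- Marginal Fréchet-type distribution function `F_i(t) = exp(-σ t^(-1/η))` for `t > 0`. -/
def margF (σ η t : ℝ) : ℝ := if 0 < t then Real.exp (-σ * t ^ (-1 / η)) else 0

/-- Joint distribution function of the random vector `X`. -/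
def jointF {Ω : Type*} [MeasureSpace Ω] {d : ℕ} (X : Fin d → Ω → ℝ) (t : Fin d → ℝ) : ℝ :=
  (ℙ {ω | ∀ i, X i ω ≤ t i}).toReal

/-- Exponent function `ℓ(t) = -ln F_X(t)`. -/
def expo {Ω : Type*} [MeasureSpace Ω] {d : ℕ} (X : Fin d → Ω → ℝ) (t : Fin d → ℝ) : ℝ :=
  -Real.log (jointF X t)

/-- Block maximum `M(I_j) = max_{i ∈ I_j} F_i(X_i)`, where `I_j = {i | B i = j}`. -/
def blockMax {Ω : Type*} [MeasureSpace Ω] {d p : ℕ} (B : Fin d → Fin p) (σ : Fin d → ℝ)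
    (η : ℝ) (X : Fin d → Ω → ℝ) (j : Fin p) (ω : Ω) : ℝ :=
  sSup ((fun i => margF (σ i) η (X i ω)) '' {i | B i = j})

/-- Extremal dependence function
`ε(λ₁,…,λ_p) = E(max_j M(I_j)^(λ_j)) / (1 - E(max_j M(I_j)^(λ_j)))`. -/
def epsFun {Ω : Type*} [MeasureSpace Ω] {d p : ℕ} (B : Fin d → Fin p) (σ : Fin d → ℝ)
    (η : ℝ) (X : Fin d → Ω → ℝ) (l : Fin p → ℝ) : ℝ :=
  (∫ ω, ⨆ j, blockMax B σ η X j ω ^ l j ∂ℙ) /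
    (1 - ∫ ω, ⨆ j, blockMax B σ η X j ω ^ l j ∂ℙ)

/-- Single-block extremal dependence function `ε_{I_j}(λ)`. -/
def epsBlock {Ω : Type*} [MeasureSpace Ω] {d p : ℕ} (B : Fin d → Fin p) (σ : Fin d → ℝ)
    (η : ℝ) (X : Fin d → Ω → ℝ) (j : Fin p) (l : ℝ) : ℝ :=
  (∫ ω, blockMax B σ η X j ω ^ l ∂ℙ) / (1 - ∫ ω, blockMax B σ η X j ω ^ l ∂ℙ)

/-! Independence splits `ℓ` into block exponents, `ℓ(t) = ∑ⱼ ℓⱼ(t)`, where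
`ℓⱼ(t) = -log P(X_i ≤ t_i for i ∈ I_j)` only sees the coordinates in `I_j`. Sending the
coordinates outside `I_j` to infinity kills the other summands, so each `ℓⱼ` inherits the
homogeneity of `ℓ`. With `s_i = σ_i ^ η` we have
`{M(I_j) ≤ u} = {X_i ≤ (-log u)^(-η) s_i for i ∈ I_j}`, hence `P(M(I_j) ≤ u) = u ^ θⱼ` with
`θⱼ = ℓⱼ(s)`, and by independence `maxⱼ M(I_j)^λⱼ` has distribution function `u ^ ∑ⱼ θⱼ / λⱼ`
on `(0, 1)`. A `[0, 1]`-valued variable with distribution function `u ^ a` has mean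
`E = a / (a + 1)`, so that `E / (1 - E) = a`. -/

lemma margF_nonneg (σ η x : ℝ) : 0 ≤ margF σ η x := by
  unfold margF
  split <;> positivity

lemma margF_lt_one {σ : ℝ} (hσ : 0 < σ) (η x : ℝ) : margF σ η x < 1 := by
  unfold margF
  split
  · rename_i hx
    have := Real.rpow_pos_of_pos hx (-1 / η)
    exact Real.exp_lt_one_iff.2 (by nlinarith)
  · exact one_pos

lemma measurable_margF (σ η : ℝ) : Measurable (margF σ η) :=
  Measurable.ite (measurableSet_lt measurable_const measurable_id)
    (by fun_prop) measurable_const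

lemma margF_le_iff {σ η u : ℝ} (hσ : 0 < σ) (hη : 0 < η) (hu0 : 0 < u) (hu1 : u < 1) (x : ℝ) :
    margF σ η x ≤ u ↔ x ≤ (-Real.log u) ^ (-η) * σ ^ η := by
  have hlog : 0 < -Real.log u := neg_pos.2 (Real.log_neg hu0 hu1)
  unfold margF
  split
  · rename_i hx
    have hexp : (-η)⁻¹ = -1 / η := by rw [inv_neg, neg_div, one_div]
    rw [← Real.exp_log hu0, Real.exp_le_exp, Real.exp_log hu0,
      show (-Real.log u) ^ (-η) * σ ^ η = (-Real.log u / σ) ^ (-η) by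
        rw [Real.div_rpow hlog.le hσ.le, Real.rpow_neg hσ.le, div_inv_eq_mul],
      ← Real.le_rpow_inv_iff_of_neg (by positivity) hx (by linarith), hexp, div_le_iff₀ hσ]
    constructor <;> intro h <;> linarith
  · rename_i hx
    exact iff_of_true hu0.le ((not_lt.1 hx).trans (by positivity))

lemma div_add_one_div_one_sub_div_add_one {x : ℝ} (hx : x + 1 ≠ 0) :
    x / (x + 1) / (1 - x / (x + 1)) = x := by
  rw [one_sub_div hx, add_sub_cancel_left, div_div_div_cancel_right₀ hx, div_one]

section Probability

variable {Ω : Type*} [MeasurableSpace Ω] {μ : Measure Ω}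

theorem integral_eq_div_add_one_of_measureReal_le_eq_rpow [IsProbabilityMeasure μ]
    {W : Ω → ℝ} (hW : Measurable W) (hW0 : ∀ ω, 0 ≤ W ω) (hW1 : ∀ ω, W ω ≤ 1)
    {a : ℝ} (ha : 0 ≤ a) (hcdf : ∀ u, 0 < u → u < 1 → μ.real {ω | W ω ≤ u} = u ^ a) :
    ∫ ω, W ω ∂μ = a / (a + 1) := by
  have hint : Integrable W μ :=
    (integrable_const (1 : ℝ)).mono' hW.aestronglyMeasurable
      (ae_of_all _ fun ω => by rw [Real.norm_eq_abs, abs_of_nonneg (hW0 ω)]; exact hW1 ω)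
  have htail : ∀ t ∈ Set.Ioi (0 : ℝ),
      μ.real {ω | t < W ω} = (Set.Iic 1).indicator (fun t => 1 - t ^ a) t := by
    intro t ht
    rcases lt_or_ge t 1 with h1 | h1
    · have hcompl : {ω | t < W ω} = {ω | W ω ≤ t}ᶜ := by ext; simp
      rw [Set.indicator_of_mem (Set.mem_Iic.2 h1.le), hcompl,
        probReal_compl_eq_one_sub (measurableSet_le hW measurable_const), hcdf t ht h1]
    · have hempty : {ω | t < W ω} = ∅ := by
        ext ω; simpa using (hW1 ω).trans h1
      rw [hempty, measureReal_empty]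
      rcases h1.eq_or_lt with rfl | h1
      · simp
      · simp [h1]
  have hpow : IntervalIntegrable (fun t : ℝ => t ^ a) volume 0 1 :=
    intervalIntegral.intervalIntegrable_rpow' (by linarith)
  rw [hint.integral_eq_integral_meas_lt (ae_of_all _ hW0),
    setIntegral_congr_fun measurableSet_Ioi htail, integral_indicator measurableSet_Iic,
    Measure.restrict_restrict measurableSet_Iic, Set.Iic_inter_Ioi,
    ← intervalIntegral.integral_of_le zero_le_one,
    intervalIntegral.integral_sub intervalIntegrable_const hpow,
    integral_rpow (Or.inl (by linarith))]
  field_simp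
  simp [Real.zero_rpow (by positivity : a + 1 ≠ 0)]

theorem ProbabilityTheory.iIndepFun.measure_forall_mem_eq_prod {ι κ β : Type*} [Countable ι]
    [Fintype κ] [MeasurableSpace β] {X : ι → Ω → β} {B : ι → κ}
    (hind : iIndepFun (fun k ω (i : {i // B i = k}) => X i.1 ω) μ)
    {P : ι → Set β} (hP : ∀ i, MeasurableSet (P i)) :
    μ {ω | ∀ i, X i ω ∈ P i} = ∏ k, μ {ω | ∀ i : {i // B i = k}, X i ω ∈ P i} := by
  have hset : {ω | ∀ i, X i ω ∈ P i} = ⋂ k ∈ Finset.univ,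
      (fun ω (i : {i // B i = k}) => X i.1 ω) ⁻¹' Set.univ.pi fun i => P i := by
    ext ω
    simp only [Set.mem_ofPred_eq, Finset.mem_univ, Set.iInter_true, Set.mem_iInter,
      Set.mem_preimage, Set.mem_univ_pi, Subtype.forall]
    exact ⟨fun h _ i _ => h i, fun h i => h (B i) i rfl⟩
  rw [hset, hind.measure_inter_preimage_eq_mul _ fun k _ => MeasurableSet.univ_pi fun i => hP i]
  simp only [Set.preimage, Set.mem_univ_pi]

theorem tendsto_measure_lt_atTop [IsFiniteMeasure μ] {X : Ω → ℝ} (hX : Measurable X) :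
    Tendsto (fun x => μ {ω | x < X ω}) atTop (𝓝 0) := by
  have hempty : ⋂ x : ℝ, {ω | x < X ω} = ∅ := by
    ext ω; simpa using ⟨X ω, le_rfl⟩
  have h := tendsto_measure_iInter_atTop (μ := μ)
    (fun x => (measurableSet_lt measurable_const hX).nullMeasurableSet)
    (fun x y hxy ω (hω : y < X ω) => hxy.trans_lt hω) ⟨0, measure_ne_top _ _⟩
  rwa [hempty, measure_empty] at h

theorem tendsto_measure_forall_le [IsProbabilityMeasure μ] {ι α : Type*} [Fintype ι]
    {X : ι → Ω → ℝ} (hX : ∀ i, Measurable (X i)) {l : Filter α} {v : α → ι → ℝ}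
    (hv : ∀ i, Tendsto (fun N => v N i) l atTop) :
    Tendsto (fun N => μ {ω | ∀ i, X i ω ≤ v N i}) l (𝓝 1) := by
  have hsum : Tendsto (fun N => ∑ i, μ {ω | v N i < X i ω}) l (𝓝 0) := by
    simpa using tendsto_finsetSum Finset.univ fun i _ =>
      (tendsto_measure_lt_atTop (hX i)).comp (hv i)
  have hcompl : Tendsto (fun N => μ {ω | ∀ i, X i ω ≤ v N i}ᶜ) l (𝓝 0) := by
    refine tendsto_of_tendsto_of_tendsto_of_le_of_le tendsto_const_nhds hsum
      (fun _ => bot_le) fun N => ?_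
    refine (measure_mono fun ω hω => ?_).trans (measure_iUnion_fintype_le μ _)
    simpa using hω
  have hmeas : ∀ N, MeasurableSet {ω | ∀ i, X i ω ≤ v N i} := fun N => by
    simp only [Set.ofPred_forall]
    exact MeasurableSet.iInter fun i => measurableSet_le (hX i) measurable_const
  have h := ENNReal.Tendsto.sub tendsto_const_nhds hcompl (Or.inl ENNReal.one_ne_top)
  rw [tsub_zero] at h
  refine h.congr fun N => ?_
  rw [prob_compl_eq_one_sub (hmeas N), ENNReal.sub_sub_cancel ENNReal.one_ne_top prob_le_one]

end Probability

section Blocks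

variable {Ω : Type*} [MeasureSpace Ω] {d p : ℕ} {X : Fin d → Ω → ℝ} {B : Fin d → Fin p}

def blockCDF (X : Fin d → Ω → ℝ) (B : Fin d → Fin p) (k : Fin p) (t : Fin d → ℝ) : ℝ :=
  (ℙ {ω | ∀ i : {i // B i = k}, X i ω ≤ t i}).toReal

def blockExpo (X : Fin d → Ω → ℝ) (B : Fin d → Fin p) (k : Fin p) (t : Fin d → ℝ) : ℝ :=
  -Real.log (blockCDF X B k t)

lemma blockExpo_congr {k : Fin p} {t t' : Fin d → ℝ} (h : ∀ i : {i // B i = k}, t i = t' i) :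
    blockExpo X B k t = blockExpo X B k t' := by
  simp only [blockExpo, blockCDF, h]

lemma jointF_le_blockCDF [IsProbabilityMeasure (ℙ : Measure Ω)] (k : Fin p) (t : Fin d → ℝ) :
    jointF X t ≤ blockCDF X B k t :=
  ENNReal.toReal_mono (measure_ne_top _ _) (measure_mono fun _ h i => h i)

lemma blockCDF_pos [IsProbabilityMeasure (ℙ : Measure Ω)]
    (hpos : ∀ t : Fin d → ℝ, (∀ i, 0 < t i) → 0 < jointF X t)
    {t : Fin d → ℝ} (ht : ∀ i, 0 < t i) (k : Fin p) : 0 < blockCDF X B k t :=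
  (hpos t ht).trans_le (jointF_le_blockCDF k t)

lemma blockExpo_nonneg [IsProbabilityMeasure (ℙ : Measure Ω)] (k : Fin p) (t : Fin d → ℝ) :
    0 ≤ blockExpo X B k t :=
  neg_nonneg.2 (Real.log_nonpos ENNReal.toReal_nonneg measureReal_le_one)

lemma jointF_eq_prod_blockCDF
    (hind : iIndepFun (fun k ω (i : {i : Fin d // B i = k}) => X i.1 ω) ℙ) (t : Fin d → ℝ) :
    jointF X t = ∏ k, blockCDF X B k t := by
  simp only [blockCDF, ← ENNReal.toReal_prod]
  exact congrArg ENNReal.toReal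
    (hind.measure_forall_mem_eq_prod fun i => measurableSet_Iic)

lemma expo_eq_sum_blockExpo [IsProbabilityMeasure (ℙ : Measure Ω)]
    (hind : iIndepFun (fun k ω (i : {i : Fin d // B i = k}) => X i.1 ω) ℙ)
    (hpos : ∀ t : Fin d → ℝ, (∀ i, 0 < t i) → 0 < jointF X t)
    {t : Fin d → ℝ} (ht : ∀ i, 0 < t i) :
    expo X t = ∑ k, blockExpo X B k t := by
  rw [expo, jointF_eq_prod_blockCDF hind,
    Real.log_prod fun k _ => (blockCDF_pos hpos ht k).ne', ← Finset.sum_neg_distrib]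
  rfl

lemma tendsto_blockExpo_zero [IsProbabilityMeasure (ℙ : Measure Ω)] (hX : ∀ i, Measurable (X i))
    {α : Type*} {l : Filter α} {v : α → Fin d → ℝ} {k : Fin p}
    (hv : ∀ i : {i // B i = k}, Tendsto (fun N => v N i) l atTop) :
    Tendsto (fun N => blockExpo X B k (v N)) l (𝓝 0) := by
  have hcdf : Tendsto (fun N => blockCDF X B k (v N)) l (𝓝 1) :=
    (ENNReal.tendsto_toReal ENNReal.one_ne_top).comp
      (tendsto_measure_forall_le (fun i => hX i.1) hv)
  simpa [blockExpo] using ((Real.continuousAt_log one_ne_zero).tendsto.comp hcdf).neg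

end Blocks

section Homogeneity

variable {Ω : Type*} [MeasureSpace Ω] [IsProbabilityMeasure (ℙ : Measure Ω)] {d p : ℕ}
  {X : Fin d → Ω → ℝ} {B : Fin d → Fin p}

lemma tendsto_expo_of_eqOn_block (hX : ∀ i, Measurable (X i))
    (hind : iIndepFun (fun k ω (i : {i : Fin d // B i = k}) => X i.1 ω) ℙ)
    (hpos : ∀ t : Fin d → ℝ, (∀ i, 0 < t i) → 0 < jointF X t)
    {α : Type*} {l : Filter α} {v : α → Fin d → ℝ} (hv : ∀ᶠ N in l, ∀ i, 0 < v N i)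
    {j : Fin p} {w : Fin d → ℝ} (hvj : ∀ N, ∀ i : {i // B i = j}, v N i = w i)
    (hvk : ∀ i, B i ≠ j → Tendsto (fun N => v N i) l atTop) :
    Tendsto (fun N => expo X (v N)) l (𝓝 (blockExpo X B j w)) := by
  have hsum : Tendsto (fun N => ∑ k, blockExpo X B k (v N)) l
      (𝓝 (∑ k, if k = j then blockExpo X B j w else 0)) := by
    refine tendsto_finsetSum _ fun k _ => ?_
    split_ifs with hk
    · subst hk
      simp only [blockExpo_congr (hvj _), tendsto_const_nhds]
    · exact tendsto_blockExpo_zero hX fun i => hvk i fun h => hk (i.2.symm.trans h)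
  rw [Finset.sum_ite_eq' Finset.univ j, if_pos (Finset.mem_univ j)] at hsum
  exact hsum.congr' (hv.mono fun N hN => (expo_eq_sum_blockExpo hind hpos hN).symm)

lemma blockExpo_mul_left (hX : ∀ i, Measurable (X i))
    (hind : iIndepFun (fun k ω (i : {i : Fin d // B i = k}) => X i.1 ω) ℙ)
    (hpos : ∀ t : Fin d → ℝ, (∀ i, 0 < t i) → 0 < jointF X t) {η : ℝ}
    (hhom : ∀ c : ℝ, 0 < c → ∀ t : Fin d → ℝ, (∀ i, 0 < t i) →
      expo X (fun i => c * t i) = c ^ (-1 / η) * expo X t)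
    {c : ℝ} (hc : 0 < c) {t : Fin d → ℝ} (ht : ∀ i, 0 < t i) (j : Fin p) :
    blockExpo X B j (fun i => c * t i) = c ^ (-1 / η) * blockExpo X B j t := by
  -- keep block `j` fixed and push all other coordinates to infinity
  set u : ℝ → Fin d → ℝ := fun N i => if B i = j then t i else N * t i
  have hu_pos : ∀ᶠ N in atTop, ∀ i, 0 < u N i :=
    (eventually_gt_atTop 0).mono fun N hN i => by
      simp only [u]; split_ifs <;> [exact ht i; exact mul_pos hN (ht i)]
  have hu_j : ∀ N, ∀ i : {i // B i = j}, u N i = t i := fun N i => if_pos i.2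
  have hu_k : ∀ i, B i ≠ j → ∀ N, u N i = N * t i := fun i hi N => if_neg hi
  have hlim : Tendsto (fun N => expo X (u N)) atTop (𝓝 (blockExpo X B j t)) :=
    tendsto_expo_of_eqOn_block hX hind hpos hu_pos hu_j fun i hi =>
      (tendsto_id.atTop_mul_const (ht i)).congr fun N => (hu_k i hi N).symm
  have hlim_c : Tendsto (fun N => expo X (fun i => c * u N i)) atTop
      (𝓝 (blockExpo X B j fun i => c * t i)) :=
    tendsto_expo_of_eqOn_block hX hind hpos
      (hu_pos.mono fun N hN i => mul_pos hc (hN i)) (fun N i => by rw [hu_j])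
      fun i hi => (tendsto_id.atTop_mul_const (mul_pos hc (ht i))).congr fun N => by
        rw [hu_k i hi, id]; ring
  refine tendsto_nhds_unique hlim_c ((hlim.const_mul _).congr' ?_)
  exact hu_pos.mono fun N hN => (hhom c hc _ hN).symm

end Homogeneity

section BlockMax

variable {Ω : Type*} [MeasureSpace Ω] {d p : ℕ} {X : Fin d → Ω → ℝ} {B : Fin d → Fin p}
  {σ : Fin d → ℝ} {η : ℝ} {j : Fin p}

lemma blockMax_le_iff (hj : ∃ i, B i = j) {ω : Ω} {v : ℝ} :
    blockMax B σ η X j ω ≤ v ↔ ∀ i : {i // B i = j}, margF (σ i) η (X i ω) ≤ v := by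
  have hne : {i | B i = j}.Nonempty := hj
  rw [blockMax, csSup_le_iff (Set.toFinite _).bddAbove (hne.image _), Set.forall_mem_image,
    Subtype.forall]
  rfl

lemma blockMax_nonneg (hj : ∃ i, B i = j) (ω : Ω) : 0 ≤ blockMax B σ η X j ω := by
  obtain ⟨i, hi⟩ := hj
  exact (margF_nonneg _ _ _).trans
    (le_csSup (Set.toFinite _).bddAbove (Set.mem_image_of_mem _ (Set.mem_ofPred.2 hi)))

lemma blockMax_le_one (hσ : ∀ i, 0 < σ i) (hj : ∃ i, B i = j) (ω : Ω) :
    blockMax B σ η X j ω ≤ 1 :=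
  (blockMax_le_iff hj).2 fun i => (margF_lt_one (hσ i) η _).le

lemma measurable_blockMax (hX : ∀ i, Measurable (X i)) (hj : ∃ i, B i = j) :
    Measurable (blockMax B σ η X j) := by
  refine measurable_of_Iic fun v => ?_
  have hset : blockMax B σ η X j ⁻¹' Set.Iic v
      = ⋂ i : {i // B i = j}, X i ⁻¹' (margF (σ i) η ⁻¹' Set.Iic v) := by
    ext ω
    simp [blockMax_le_iff hj]
  rw [hset]
  exact MeasurableSet.iInter fun i => hX i (measurable_margF _ _ measurableSet_Iic)

lemma measureReal_blockMax_le [IsProbabilityMeasure (ℙ : Measure Ω)]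
    (hX : ∀ i, Measurable (X i))
    (hind : iIndepFun (fun k ω (i : {i : Fin d // B i = k}) => X i.1 ω) ℙ)
    (hpos : ∀ t : Fin d → ℝ, (∀ i, 0 < t i) → 0 < jointF X t)
    (hhom : ∀ c : ℝ, 0 < c → ∀ t : Fin d → ℝ, (∀ i, 0 < t i) →
      expo X (fun i => c * t i) = c ^ (-1 / η) * expo X t)
    (hσ : ∀ i, 0 < σ i) (hη : 0 < η) (hj : ∃ i, B i = j) {u : ℝ} (hu0 : 0 < u) (hu1 : u < 1) :
    (ℙ {ω | blockMax B σ η X j ω ≤ u}).toReal = u ^ blockExpo X B j (fun i => σ i ^ η) := by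
  have hlog : 0 < -Real.log u := neg_pos.2 (Real.log_neg hu0 hu1)
  set c := (-Real.log u) ^ (-η)
  have hc : 0 < c := by positivity
  have hs : ∀ i, 0 < σ i ^ η := fun i => by have := hσ i; positivity
  have hset : {ω | blockMax B σ η X j ω ≤ u} = {ω | ∀ i : {i // B i = j}, X i ω ≤ c * σ i ^ η} := by
    ext ω
    simp only [Set.mem_ofPred_eq, blockMax_le_iff hj, margF_le_iff (hσ _) hη hu0 hu1]
    rfl
  have hcexp : c ^ (-1 / η) = -Real.log u := by
    rw [← Real.rpow_mul hlog.le, show -η * (-1 / η) = 1 by field_simp, Real.rpow_one]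
  have hcdf : blockCDF X B j (fun i => c * σ i ^ η)
      = Real.exp (-blockExpo X B j (fun i => c * σ i ^ η)) := by
    rw [blockExpo, neg_neg, Real.exp_log (blockCDF_pos hpos (fun i => mul_pos hc (hs i)) j)]
  rw [hset]
  change blockCDF X B j (fun i => c * σ i ^ η) = _
  rw [hcdf, blockExpo_mul_left hX hind hpos hhom hc hs, hcexp, Real.rpow_def_of_pos hu0]
  ring_nf

lemma measure_forall_blockMax_le
    (hind : iIndepFun (fun k ω (i : {i : Fin d // B i = k}) => X i.1 ω) ℙ)
    (hB : Function.Surjective B) (v : Fin p → ℝ) :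
    ℙ {ω | ∀ k, blockMax B σ η X k ω ≤ v k} = ∏ k, ℙ {ω | blockMax B σ η X k ω ≤ v k} := by
  have hblock : ∀ k, {ω | blockMax B σ η X k ω ≤ v k}
      = {ω | ∀ i : {i // B i = k}, X i ω ∈ margF (σ i) η ⁻¹' Set.Iic (v (B i))} := fun k => by
    ext ω
    simp only [Set.mem_ofPred_eq, blockMax_le_iff (hB k), Set.mem_preimage, Set.mem_Iic]
    exact forall_congr' fun i => by rw [i.2]
  have hall : {ω | ∀ k, blockMax B σ η X k ω ≤ v k}
      = {ω | ∀ i, X i ω ∈ margF (σ i) η ⁻¹' Set.Iic (v (B i))} := by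
    ext ω
    simp only [Set.mem_ofPred_eq, blockMax_le_iff (hB _), Set.mem_preimage, Set.mem_Iic]
    exact ⟨fun h i => h (B i) ⟨i, rfl⟩, fun h k i => (h i).trans_eq (congrArg v i.2)⟩
  rw [hall, hind.measure_forall_mem_eq_prod fun i => measurable_margF _ _ measurableSet_Iic]
  simp only [hblock]

lemma measureReal_iSup_blockMax_rpow_le [IsProbabilityMeasure (ℙ : Measure Ω)]
    (hX : ∀ i, Measurable (X i))
    (hind : iIndepFun (fun k ω (i : {i : Fin d // B i = k}) => X i.1 ω) ℙ)
    (hpos : ∀ t : Fin d → ℝ, (∀ i, 0 < t i) → 0 < jointF X t)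
    (hhom : ∀ c : ℝ, 0 < c → ∀ t : Fin d → ℝ, (∀ i, 0 < t i) →
      expo X (fun i => c * t i) = c ^ (-1 / η) * expo X t)
    (hσ : ∀ i, 0 < σ i) (hη : 0 < η) (hB : Function.Surjective B)
    {l : Fin p → ℝ} (hl : ∀ j, 0 < l j) {u : ℝ} (hu0 : 0 < u) (hu1 : u < 1) :
    (ℙ {ω | ⨆ j, blockMax B σ η X j ω ^ l j ≤ u}).toReal
      = u ^ ∑ j, (l j)⁻¹ * blockExpo X B j (fun i => σ i ^ η) := by
  have hrpow : ∀ j ω, blockMax B σ η X j ω ^ l j ≤ u ↔ blockMax B σ η X j ω ≤ u ^ (l j)⁻¹ :=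
    fun j ω => (Real.le_rpow_inv_iff_of_pos (blockMax_nonneg (hB j) ω) hu0.le (hl j)).symm
  have hset : {ω | ⨆ j, blockMax B σ η X j ω ^ l j ≤ u}
      = {ω | ∀ j, blockMax B σ η X j ω ≤ u ^ (l j)⁻¹} := by
    ext ω
    simp only [Set.mem_ofPred_eq, ← hrpow]
    exact ⟨fun h j => (le_ciSup (Set.finite_range _).bddAbove j).trans h,
      fun h => Real.iSup_le h hu0.le⟩
  rw [hset, measure_forall_blockMax_le hind hB, ENNReal.toReal_prod, Real.rpow_sum_of_pos hu0]
  refine Finset.prod_congr rfl fun j _ => ?_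
  rw [measureReal_blockMax_le hX hind hpos hhom hσ hη (hB j) (Real.rpow_pos_of_pos hu0 _)
    (Real.rpow_lt_one hu0.le hu1 (inv_pos.2 (hl j))), ← Real.rpow_mul hu0.le]

end BlockMax

theorem statement7_general
    {Ω : Type*} [MeasureSpace Ω] [IsProbabilityMeasure (ℙ : Measure Ω)]
    {d p : ℕ}
    (X : Fin d → Ω → ℝ) (hX : ∀ i, Measurable (X i))
    (σ : Fin d → ℝ) (hσ : ∀ i, 0 < σ i)
    (η : ℝ) (hη0 : 0 < η)
    (hpos : ∀ t : Fin d → ℝ, (∀ i, 0 < t i) → 0 < jointF X t)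
    (hhom : ∀ c : ℝ, 0 < c → ∀ t : Fin d → ℝ, (∀ i, 0 < t i) →
      expo X (fun i => c * t i) = c ^ (-1 / η) * expo X t)
    (B : Fin d → Fin p) (hB : Function.Surjective B)
    (hind : iIndepFun
      (fun j (ω : Ω) (i : {i : Fin d // B i = j}) => X i.1 ω) ℙ)
    (l : Fin p → ℝ) (hl : ∀ j, 0 < l j) :
    epsFun B σ η X l = ∑ j, (l j)⁻¹ * epsBlock B σ η X j 1 := by
  set θ := fun j => blockExpo X B j (fun i => σ i ^ η)
  have hθ : ∀ j, 0 ≤ θ j := fun j => blockExpo_nonneg _ _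
  have hsum : 0 ≤ ∑ j, (l j)⁻¹ * θ j :=
    Finset.sum_nonneg fun j _ => mul_nonneg (inv_nonneg.2 (hl j).le) (hθ j)
  have hblock : ∀ j, ∫ ω, blockMax B σ η X j ω ^ (1 : ℝ) = θ j / (θ j + 1) := fun j => by
    simp only [Real.rpow_one]
    exact integral_eq_div_add_one_of_measureReal_le_eq_rpow (measurable_blockMax hX (hB j))
      (blockMax_nonneg (hB j)) (blockMax_le_one hσ (hB j)) (hθ j)
      fun u hu0 hu1 => measureReal_blockMax_le hX hind hpos hhom hσ hη0 (hB j) hu0 hu1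
  have hjoint : ∫ ω, ⨆ j, blockMax B σ η X j ω ^ l j
      = (∑ j, (l j)⁻¹ * θ j) / (∑ j, (l j)⁻¹ * θ j + 1) :=
    integral_eq_div_add_one_of_measureReal_le_eq_rpow
      (Measurable.iSup fun j => (measurable_blockMax hX (hB j)).pow_const _)
      (fun ω => Real.iSup_nonneg fun j => Real.rpow_nonneg (blockMax_nonneg (hB j) ω) _)
      (fun ω => Real.iSup_le (fun j => Real.rpow_le_one (blockMax_nonneg (hB j) ω)
        (blockMax_le_one hσ (hB j) ω) (hl j).le) zero_le_one)
      hsum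
      fun u hu0 hu1 => measureReal_iSup_blockMax_rpow_le hX hind hpos hhom hσ hη0 hB hl hu0 hu1
  rw [epsFun, hjoint, div_add_one_div_one_sub_div_add_one (by linarith)]
  refine Finset.sum_congr rfl fun j _ => ?_
  rw [epsBlock, hblock j, div_add_one_div_one_sub_div_add_one (by linarith [hθ j])]

theorem statement7
    {Ω : Type*} [MeasureSpace Ω] [IsProbabilityMeasure (ℙ : Measure Ω)]
    {d p : ℕ} (hd : 0 < d) (hp : 0 < p)
    (X : Fin d → Ω → ℝ) (hX : ∀ i, Measurable (X i))
    (σ : Fin d → ℝ) (hσ : ∀ i, 0 < σ i)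
    (η : ℝ) (hη0 : 0 < η) (hη1 : η ≤ 1)
    (hmarg : ∀ i, ∀ t : ℝ, 0 < t →
      ℙ {ω | X i ω ≤ t} = ENNReal.ofReal (Real.exp (-σ i * t ^ (-1 / η))))
    (hpos : ∀ t : Fin d → ℝ, (∀ i, 0 < t i) → 0 < jointF X t)
    (hhom : ∀ c : ℝ, 0 < c → ∀ t : Fin d → ℝ, (∀ i, 0 < t i) →
      expo X (fun i => c * t i) = c ^ (-1 / η) * expo X t)
    (B : Fin d → Fin p) (hB : Function.Surjective B)
    (hind : iIndepFun
      (fun j (ω : Ω) (i : {i : Fin d // B i = j}) => X i.1 ω) ℙ)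
    (l : Fin p → ℝ) (hl : ∀ j, 0 < l j) :
    epsFun B σ η X l = ∑ j, (l j)⁻¹ * epsBlock B σ η X j 1 :=
  statement7_general X hX σ hσ η hη0 hpos hhom B hB hind l hl
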